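/- There exists a constant C such that for all k₁, k₂, k₃, j₁, j₂, j₃ ∈ ℕ with |k₁ − k₃| ≤ 5 and k₂ ≤ k₁ − 10, and all nonnegative f₁, f₂, f₃ ∈ L²(ℤ² × ℝ) with supp(f_i) ⊆ D_{k_i, ≤ j_i} for i = 1, 2, 3: ∫_{ℤ² × ℝ} (f₁ * f₂) f₃ ≤ C ‖f₁‖_{L²} 2^{j₂/2} 2^{k₂/2} ‖f₂‖_{L²} (1 + 2^{(j₃ − 2k₁)/2}) ‖f₃‖_{L²}. -/

import Mathlib

open MeasureTheory
open scoped ENNReal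

/-- Counting measure on `ℤ²` times Lebesgue measure on `ℝ`. -/
noncomputable def muZ : Measure ((ℤ × ℤ) × ℝ) :=
  (Measure.count : Measure (ℤ × ℤ)).prod (volume : Measure ℝ)

/-- Convolution on `ℤ² × ℝ` of nonnegative functions, valued in `ℝ≥0∞`:
`(f * g)(ζ, τ) = ∑_{ζ'} ∫ f(ζ', τ') g(ζ - ζ', τ - τ') dτ'`. -/
noncomputable def convZ (f g : (ℤ × ℤ) × ℝ → ℝ) (p : (ℤ × ℤ) × ℝ) : ℝ≥0∞ :=
  ∑' ζ : ℤ × ℤ, ∫⁻ τ : ℝ,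
    ENNReal.ofReal (f (ζ, τ)) * ENNReal.ofReal (g (p.1 - ζ, p.2 - τ))

/-- The Zakharov-Kuznetsov dispersion relation `ω(ξ,η) = ξ³ + ξη²` on `ℤ²`. -/
def omegaZK (ζ : ℤ × ℤ) : ℝ := ((ζ.1 : ℝ)) ^ 3 + (ζ.1 : ℝ) * ((ζ.2 : ℝ)) ^ 2

/-- The isotropic frequency-modulation region
`D_{k,≤j} = {(ξ,η,τ) : 2^{k-1} ≤ |(ξ,η)| < 2^k, |τ - ω(ξ,η)| ≤ 2^j}`,
with `|(ξ,η)|` the Euclidean norm. -/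
noncomputable def DZ (k j : ℕ) : Set ((ℤ × ℤ) × ℝ) :=
  {p | (2:ℝ) ^ ((k : ℤ) - 1) ≤ Real.sqrt (((p.1.1 : ℝ)) ^ 2 + ((p.1.2 : ℝ)) ^ 2) ∧
    Real.sqrt (((p.1.1 : ℝ)) ^ 2 + ((p.1.2 : ℝ)) ^ 2) < (2:ℝ) ^ (k : ℤ) ∧
    |p.2 - omegaZK p.1| ≤ (2:ℝ) ^ (j : ℤ)}

open Function

/-!
Write the left side as `∫ f₁(y) H(y) dy` with `H(y) = ∫ f₂(x - y) f₃(x) dx`. Cauchy–Schwarz in `y`,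
and for each `y` in `x` over `E_y = {x : x - y ∈ D_{k₂,≤j₂}, x ∈ D_{k₃,≤j₃}}`, bounds it by
`sup_y |E_y|^{1/2} ‖f₁‖ ‖f₂‖ ‖f₃‖`. A frequency slice of `E_y` is an interval of length
`≤ 2 · 2^{min(j₂,j₃)}`, and it is empty unless the frequency `ζ` is resonant:
`|τ_y + ω(ζ - ζ_y) - ω(ζ)| ≤ 2^{j₂} + 2^{j₃}`. On a line `η = const` the function
`ξ ↦ ω(ξ, η) - ω((ξ, η) - ζ_y)` has difference quotients `≳ |ζ|² ∼ 2^{2k₁}`, since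
`|ζ - ζ_y| < 2^{k₂} ≪ |ζ|`; so each of the `≲ 2^{k₂}` relevant lines carries
`≲ 1 + 2^{max(j₂,j₃) - 2k₁}` resonant frequencies, and
`|E_y| ≲ 2^{k₂} 2^{min(j₂,j₃)} (1 + 2^{max(j₂,j₃) - 2k₁}) ≤ 2^{k₂} 2^{j₂} (1 + 2^{j₃ - 2k₁})`.
-/

section CauchySchwarz
variable {α : Type*} [MeasurableSpace α] {μ : Measure α}

theorem eLpNorm_ofReal_of_nonneg {f : α → ℝ} (hf : ∀ x, 0 ≤ f x) {p : ℝ≥0∞} :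
    eLpNorm (fun x => ENNReal.ofReal (f x)) p μ = eLpNorm f p μ :=
  eLpNorm_congr_enorm_ae (.of_forall fun x => by simp [Real.enorm_eq_ofReal (hf x)])

theorem eLpNorm_two_sq (f : α → ℝ≥0∞) : eLpNorm f 2 μ ^ 2 = ∫⁻ x, f x ^ 2 ∂μ := by
  simpa using eLpNorm_nnreal_pow_eq_lintegral (μ := μ) (f := f) (p := 2) two_ne_zero

theorem sq_lintegral_mul_le {f g : α → ℝ≥0∞} (hf : AEMeasurable f μ) (hg : AEMeasurable g μ) :
    (∫⁻ x, f x * g x ∂μ) ^ 2 ≤ (∫⁻ x, f x ^ 2 ∂μ) * ∫⁻ x, g x ^ 2 ∂μ := by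
  have h := ENNReal.lintegral_mul_le_Lp_mul_Lq μ Real.HolderConjugate.two_two hf hg
  calc (∫⁻ x, f x * g x ∂μ) ^ 2
      ≤ ((∫⁻ x, f x ^ (2:ℝ) ∂μ) ^ (1 / 2 : ℝ) * (∫⁻ x, g x ^ (2:ℝ) ∂μ) ^ (1 / 2 : ℝ)) ^ 2 :=
        pow_le_pow_left₀ zero_le h 2
    _ = (∫⁻ x, f x ^ 2 ∂μ) * ∫⁻ x, g x ^ 2 ∂μ := by
        simp only [ENNReal.rpow_two, mul_pow, ← ENNReal.rpow_natCast, ← ENNReal.rpow_mul]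
        norm_num

theorem sq_lintegral_le_measure_mul {f : α → ℝ≥0∞} {s : Set α} (hf : AEMeasurable f μ)
    (hs : support f ⊆ s) : (∫⁻ x, f x ∂μ) ^ 2 ≤ μ s * ∫⁻ x, f x ^ 2 ∂μ := by
  rw [← setLIntegral_eq_of_support_subset hs]
  calc (∫⁻ x in s, f x ∂μ) ^ 2 = (∫⁻ x in s, 1 * f x ∂μ) ^ 2 := by simp
    _ ≤ (∫⁻ x in s, 1 ^ 2 ∂μ) * ∫⁻ x in s, f x ^ 2 ∂μ :=
        sq_lintegral_mul_le aemeasurable_const hf.restrict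
    _ ≤ μ s * ∫⁻ x, f x ^ 2 ∂μ := by
        simp only [one_pow, setLIntegral_const, one_mul]
        gcongr
        exact Measure.restrict_le_self

end CauchySchwarz

section Bilinear
variable {G : Type*} [AddCommGroup G] [MeasurableSpace G] [MeasurableAdd₂ G] [MeasurableNeg G]
  {μ : Measure G} [SFinite μ] [μ.IsAddLeftInvariant] {F₁ F₂ F₃ : G → ℝ≥0∞}

theorem lintegral_lconvolution_mul (h₁ : AEMeasurable F₁ μ) (h₂ : AEMeasurable F₂ μ)
    (h₃ : AEMeasurable F₃ μ) :
    ∫⁻ x, (F₁ ⋆ₗ[μ] F₂) x * F₃ x ∂μ = ∫⁻ y, F₁ y * ∫⁻ x, F₂ (-y + x) * F₃ x ∂μ ∂μ := by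
  calc ∫⁻ x, (F₁ ⋆ₗ[μ] F₂) x * F₃ x ∂μ = ∫⁻ x, ∫⁻ y, F₁ y * F₂ (-y + x) * F₃ x ∂μ ∂μ := by
        refine lintegral_congr fun x => ?_
        exact (lintegral_mul_const'' _ (by fun_prop)).symm
    _ = ∫⁻ y, ∫⁻ x, F₁ y * (F₂ (-y + x) * F₃ x) ∂μ ∂μ := by
        rw [lintegral_lintegral_swap (by fun_prop)]
        simp only [mul_assoc]
    _ = ∫⁻ y, F₁ y * ∫⁻ x, F₂ (-y + x) * F₃ x ∂μ ∂μ := by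
        refine lintegral_congr fun y => ?_
        exact lintegral_const_mul'' _ (by fun_prop)

theorem lintegral_lintegral_translate_mul (h₂ : AEMeasurable F₂ μ) (h₃ : AEMeasurable F₃ μ) :
    ∫⁻ y, ∫⁻ x, F₂ (-y + x) * F₃ x ∂μ ∂μ = (∫⁻ x, F₂ x ∂μ) * ∫⁻ x, F₃ x ∂μ := by
  calc ∫⁻ y, ∫⁻ x, F₂ (-y + x) * F₃ x ∂μ ∂μ = ∫⁻ y, ∫⁻ z, F₂ z * F₃ (y + z) ∂μ ∂μ := by
        refine lintegral_congr fun y => ?_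
        rw [← lintegral_add_left_eq_self _ y]
        simp
    _ = ∫⁻ z, F₂ z * ∫⁻ y, F₃ (y + z) ∂μ ∂μ := by
        rw [lintegral_lintegral_swap (by fun_prop)]
        refine lintegral_congr fun z => ?_
        exact lintegral_const_mul'' _ (by fun_prop)
    _ = (∫⁻ x, F₂ x ∂μ) * ∫⁻ x, F₃ x ∂μ := by
        simp_rw [lintegral_add_right_eq_self F₃]
        exact lintegral_mul_const'' _ h₂

theorem lintegral_lconvolution_mul_le {S₂ S₃ : Set G} {M : ℝ≥0∞} (h₁ : AEMeasurable F₁ μ)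
    (h₂ : AEMeasurable F₂ μ) (h₃ : AEMeasurable F₃ μ) (hS₂ : support F₂ ⊆ S₂)
    (hS₃ : support F₃ ⊆ S₃) (hM : ∀ y, μ ({x | -y + x ∈ S₂} ∩ S₃) ≤ M ^ 2) :
    ∫⁻ x, (F₁ ⋆ₗ[μ] F₂) x * F₃ x ∂μ ≤ M * (eLpNorm F₁ 2 μ * eLpNorm F₂ 2 μ * eLpNorm F₃ 2 μ) := by
  have hH : ∀ y, (∫⁻ x, F₂ (-y + x) * F₃ x ∂μ) ^ 2 ≤
      M ^ 2 * ∫⁻ x, F₂ (-y + x) ^ 2 * F₃ x ^ 2 ∂μ := by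
    intro y
    have hsupp : support (fun x => F₂ (-y + x) * F₃ x) ⊆ {x | -y + x ∈ S₂} ∩ S₃ := by
      intro x hx
      rw [mem_support, mul_ne_zero_iff] at hx
      exact ⟨hS₂ hx.1, hS₃ hx.2⟩
    calc (∫⁻ x, F₂ (-y + x) * F₃ x ∂μ) ^ 2
        ≤ μ ({x | -y + x ∈ S₂} ∩ S₃) * ∫⁻ x, (F₂ (-y + x) * F₃ x) ^ 2 ∂μ :=
          sq_lintegral_le_measure_mul (by fun_prop) hsupp
      _ ≤ M ^ 2 * ∫⁻ x, F₂ (-y + x) ^ 2 * F₃ x ^ 2 ∂μ := by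
          simp only [mul_pow]
          gcongr
          exact hM y
  refine (ENNReal.pow_le_pow_left_iff two_ne_zero).mp ?_
  calc (∫⁻ x, (F₁ ⋆ₗ[μ] F₂) x * F₃ x ∂μ) ^ 2
      = (∫⁻ y, F₁ y * ∫⁻ x, F₂ (-y + x) * F₃ x ∂μ ∂μ) ^ 2 := by
        rw [lintegral_lconvolution_mul h₁ h₂ h₃]
    _ ≤ (∫⁻ y, F₁ y ^ 2 ∂μ) * ∫⁻ y, (∫⁻ x, F₂ (-y + x) * F₃ x ∂μ) ^ 2 ∂μ :=
        sq_lintegral_mul_le h₁ (by fun_prop)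
    _ ≤ (∫⁻ y, F₁ y ^ 2 ∂μ) * ∫⁻ y, M ^ 2 * ∫⁻ x, F₂ (-y + x) ^ 2 * F₃ x ^ 2 ∂μ ∂μ := by
        gcongr with y
        exact hH y
    _ = (∫⁻ y, F₁ y ^ 2 ∂μ) * (M ^ 2 * ((∫⁻ x, F₂ x ^ 2 ∂μ) * ∫⁻ x, F₃ x ^ 2 ∂μ)) := by
        rw [lintegral_const_mul'' _ (by fun_prop),
          lintegral_lintegral_translate_mul (F₂ := fun x => F₂ x ^ 2) (by fun_prop) (by fun_prop)]
    _ = (M * (eLpNorm F₁ 2 μ * eLpNorm F₂ 2 μ * eLpNorm F₃ 2 μ)) ^ 2 := by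
        simp only [mul_pow, eLpNorm_two_sq]
        ring

end Bilinear

theorem Real.volume_setOf_abs_sub_le (a r : ℝ) :
    volume {t : ℝ | |t - a| ≤ r} = ENNReal.ofReal (2 * r) := by
  rw [← Real.volume_closedBall a r]
  congr 1

theorem Int.count_abs_sub_le_le (c r : ℝ) :
    Measure.count {n : ℤ | |(n : ℝ) - c| ≤ r} ≤ ENNReal.ofReal (2 * r + 1) := by
  have hset : {n : ℤ | |(n : ℝ) - c| ≤ r} = ↑(Finset.Icc ⌈c - r⌉ ⌊c + r⌋) := by
    ext n
    simp only [Set.mem_ofPred_eq, Finset.coe_Icc, Set.mem_Icc, Int.ceil_le, Int.le_floor, abs_le]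
    constructor <;> rintro ⟨h₁, h₂⟩ <;> constructor <;> linarith
  rw [hset, Measure.count_apply_finset, Int.card_Icc]
  rcases le_total 0 (⌊c + r⌋ + 1 - ⌈c - r⌉) with h | h
  · rw [← ENNReal.ofReal_natCast, ← Int.cast_natCast, Int.toNat_of_nonneg h]
    refine ENNReal.ofReal_le_ofReal ?_
    push_cast
    linarith [Int.floor_le (c + r), Int.le_ceil (c - r)]
  · simp [Int.toNat_of_nonpos h]

theorem Int.count_le_of_abs_sub_le {S : Set ℤ} {d : ℝ}
    (h : ∀ m ∈ S, ∀ n ∈ S, |(n : ℝ) - m| ≤ d) :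
    Measure.count S ≤ ENNReal.ofReal (2 * d + 1) := by
  rcases S.eq_empty_or_nonempty with rfl | ⟨m, hm⟩
  · simp
  exact (measure_mono fun n hn => h m hm n hn).trans (Int.count_abs_sub_le_le m d)

section Fibers
variable {α β : Type*} [MeasurableSpace α] [MeasurableSpace β]
  [Countable α] [MeasurableSingletonClass α]

theorem tsum_indicator_one_eq_count (s : Set α) :
    ∑' a, s.indicator 1 a = Measure.count s := by
  rw [← lintegral_count, lintegral_indicator_one s.to_countable.measurableSet]

theorem count_prod_le_of_fibers [Countable β] [MeasurableSingletonClass β] {S : Set (α × β)}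
    {W : Set β} {N : ℝ≥0∞} (hW : ∀ p ∈ S, p.2 ∈ W)
    (hfib : ∀ b ∈ W, Measure.count {a | (a, b) ∈ S} ≤ N) :
    Measure.count S ≤ Measure.count W * N := by
  rw [← tsum_indicator_one_eq_count, ENNReal.tsum_prod', ENNReal.tsum_comm]
  calc ∑' b, ∑' a, S.indicator 1 (a, b) ≤ ∑' b, W.indicator (fun _ => N) b := by
        refine ENNReal.tsum_le_tsum fun b => ?_
        by_cases hb : b ∈ W
        · simpa [hb, ← tsum_indicator_one_eq_count, Set.indicator] using hfib b hb
        · have : ∀ a, (a, b) ∉ S := fun a h => hb (hW _ h)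
          simp [this]
    _ = Measure.count W * N := by
        rw [← lintegral_count, lintegral_indicator_const W.to_countable.measurableSet, mul_comm]

theorem prod_count_le_of_slices {ν : Measure β} [SFinite ν] {A : Set (α × β)}
    (hA : MeasurableSet A) {Z : Set α} {L : ℝ≥0∞}
    (hZ : ∀ p ∈ A, p.1 ∈ Z) (hL : ∀ a ∈ Z, ν (Prod.mk a ⁻¹' A) ≤ L) :
    (Measure.count.prod ν) A ≤ Measure.count Z * L := by
  rw [Measure.prod_apply hA, lintegral_count]
  calc ∑' a, ν (Prod.mk a ⁻¹' A) ≤ ∑' a, Z.indicator (fun _ => L) a := by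
        refine ENNReal.tsum_le_tsum fun a => ?_
        by_cases ha : a ∈ Z
        · simpa [ha] using hL a ha
        · have : Prod.mk a ⁻¹' A = ∅ := Set.eq_empty_of_forall_notMem fun b hb => ha (hZ _ hb)
          simp [this]
    _ = Measure.count Z * L := by
        rw [← lintegral_count, lintegral_indicator_const Z.to_countable.measurableSet, mul_comm]

end Fibers

def normSqZ (ζ : ℤ × ℤ) : ℝ := (ζ.1 : ℝ) ^ 2 + (ζ.2 : ℝ) ^ 2

theorem abs_sub_mul_le_abs_resonance_sub {ζ ζ' ζ₁ : ℤ × ℤ} {R A : ℝ} (hη : ζ.2 = ζ'.2)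
    (hR : R ^ 2 ≤ normSqZ ζ) (hR' : R ^ 2 ≤ normSqZ ζ')
    (hA : normSqZ (ζ - ζ₁) ≤ A ^ 2) (hA' : normSqZ (ζ' - ζ₁) ≤ A ^ 2) :
    |(ζ'.1 : ℝ) - ζ.1| * (R ^ 2 - 3 * A ^ 2) ≤
      |(omegaZK ζ' - omegaZK (ζ' - ζ₁)) - (omegaZK ζ - omegaZK (ζ - ζ₁))| := by
  obtain ⟨ξ, η⟩ := ζ
  obtain ⟨ξ', η'⟩ := ζ'
  obtain ⟨s, t⟩ := ζ₁
  obtain rfl : η = η' := hη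
  simp only [normSqZ, omegaZK, Prod.mk_sub_mk, Int.cast_sub] at hR hR' hA hA' ⊢
  set B₁ : ℝ := ξ' ^ 2 + ξ' * ξ + ξ ^ 2 + η ^ 2
  set B₂ : ℝ := (ξ' - s) ^ 2 + (ξ' - s) * (ξ - s) + (ξ - s) ^ 2 + (η - t) ^ 2
  have hfactor : (ξ' ^ 3 + ξ' * η ^ 2 - ((ξ' - s) ^ 3 + (ξ' - s) * (η - t) ^ 2)) -
      (ξ ^ 3 + ξ * η ^ 2 - ((ξ - s) ^ 3 + (ξ - s) * (η - t) ^ 2)) =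
      ((ξ' : ℝ) - ξ) * (B₁ - B₂) := by
    ring
  have hB₁ : R ^ 2 ≤ B₁ := by nlinarith [sq_nonneg ((ξ' : ℝ) + ξ)]
  have hB₂ : B₂ ≤ 3 * A ^ 2 := by nlinarith [sq_nonneg ((ξ' : ℝ) - ξ), sq_nonneg ((η : ℝ) - t)]
  rw [hfactor, abs_mul]
  gcongr
  exact (by linarith : R ^ 2 - 3 * A ^ 2 ≤ B₁ - B₂).trans (le_abs_self _)

/-- `y = (ζ_y, τ_y)` is the point of `f₁`; the last condition is what survives of the modulation
constraints on `f₂` and `f₃` once `τ` is eliminated. -/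
def resonantSet (y : (ℤ × ℤ) × ℝ) (R A T : ℝ) : Set (ℤ × ℤ) :=
  {ζ | R ^ 2 ≤ normSqZ ζ ∧ normSqZ (ζ - y.1) ≤ A ^ 2 ∧
    |y.2 + omegaZK (ζ - y.1) - omegaZK ζ| ≤ T}

section Resonance
variable {y : (ℤ × ℤ) × ℝ} {R A T : ℝ}

theorem abs_sub_le_of_mem_resonantSet (hR : 0 < R) (hRA : 6 * A ^ 2 ≤ R ^ 2) {ζ ζ' : ℤ × ℤ}
    (h : ζ ∈ resonantSet y R A T) (h' : ζ' ∈ resonantSet y R A T) (hη : ζ.2 = ζ'.2) :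
    |(ζ'.1 : ℝ) - ζ.1| ≤ 4 * T / R ^ 2 := by
  have hgap := abs_sub_mul_le_abs_resonance_sub hη h.1 h'.1 h.2.1 h'.2.1
  have hdiff :
      |(omegaZK ζ' - omegaZK (ζ' - y.1)) - (omegaZK ζ - omegaZK (ζ - y.1))| ≤ 2 * T := by
    rw [show (omegaZK ζ' - omegaZK (ζ' - y.1)) - (omegaZK ζ - omegaZK (ζ - y.1)) =
        (y.2 + omegaZK (ζ - y.1) - omegaZK ζ) - (y.2 + omegaZK (ζ' - y.1) - omegaZK ζ') by ring,
      two_mul]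
    exact (abs_sub _ _).trans (add_le_add h.2.2 h'.2.2)
  rw [le_div_iff₀ (by positivity)]
  nlinarith [abs_nonneg ((ζ'.1 : ℝ) - ζ.1)]

theorem count_resonantSet_le (hR : 0 < R) (hA : 0 ≤ A) (hRA : 6 * A ^ 2 ≤ R ^ 2) :
    Measure.count (resonantSet y R A T) ≤
      ENNReal.ofReal (2 * A + 1) * ENNReal.ofReal (2 * (4 * T / R ^ 2) + 1) := by
  refine (count_prod_le_of_fibers (W := {η : ℤ | |(η : ℝ) - y.1.2| ≤ A}) ?_ ?_).trans
    (by gcongr; exact Int.count_abs_sub_le_le _ _)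
  · intro ζ hζ
    refine abs_le_of_sq_le_sq ?_ hA
    have := hζ.2.1
    simp only [normSqZ, Prod.fst_sub, Prod.snd_sub, Int.cast_sub] at this
    nlinarith [sq_nonneg ((ζ.1 : ℝ) - y.1.1)]
  · intro η _
    exact Int.count_le_of_abs_sub_le fun m hm n hn =>
      abs_sub_le_of_mem_resonantSet hR hRA hm hn rfl

end Resonance

instance : SFinite muZ := by unfold muZ; infer_instance
instance : muZ.IsAddLeftInvariant := by unfold muZ; infer_instance

theorem measurableSet_DZ (k j : ℕ) : MeasurableSet (DZ k j) := by
  unfold DZ; measurability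

theorem normSqZ_bounds_of_mem_DZ {k j : ℕ} {p : (ℤ × ℤ) × ℝ} (hp : p ∈ DZ k j) :
    (2 ^ k / 2) ^ 2 ≤ normSqZ p.1 ∧ normSqZ p.1 ≤ (2 ^ k) ^ 2 ∧ |p.2 - omegaZK p.1| ≤ 2 ^ j := by
  obtain ⟨hlow, hhigh, hmod⟩ := hp
  rw [zpow_sub_one₀ two_ne_zero, zpow_natCast, ← div_eq_mul_inv] at hlow
  rw [zpow_natCast] at hhigh hmod
  exact ⟨(Real.le_sqrt (by positivity) (by unfold normSqZ; positivity)).mp hlow,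
    ((Real.sqrt_lt' (by positivity)).mp hhigh).le, hmod⟩

theorem bounds_of_mem_translate_DZ_inter_DZ {k₂ k₃ j₂ j₃ : ℕ} {y x : (ℤ × ℤ) × ℝ}
    (hx : x ∈ {x | -y + x ∈ DZ k₂ j₂} ∩ DZ k₃ j₃) :
    x.1 ∈ resonantSet y (2 ^ k₃ / 2) (2 ^ k₂) (2 ^ j₂ + 2 ^ j₃) ∧
      |x.2 - (y.2 + omegaZK (x.1 - y.1))| ≤ 2 ^ j₂ ∧ |x.2 - omegaZK x.1| ≤ 2 ^ j₃ := by
  obtain ⟨h₂, h₃⟩ := hx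
  obtain ⟨-, hA, hmod₂⟩ := normSqZ_bounds_of_mem_DZ h₂
  obtain ⟨hR, -, hmod₃⟩ := normSqZ_bounds_of_mem_DZ h₃
  simp only [neg_add_eq_sub, Prod.fst_sub, Prod.snd_sub, sub_sub] at hA hmod₂
  refine ⟨⟨hR, hA, ?_⟩, hmod₂, hmod₃⟩
  calc |y.2 + omegaZK (x.1 - y.1) - omegaZK x.1|
      = |(x.2 - omegaZK x.1) - (x.2 - (y.2 + omegaZK (x.1 - y.1)))| := by ring_nf
    _ ≤ _ := (abs_sub _ _).trans (by linarith)

theorem muZ_translate_DZ_inter_DZ_le (k₂ k₃ j₂ j₃ : ℕ) (hk : k₂ + 5 ≤ k₃) (y : (ℤ × ℤ) × ℝ) :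
    muZ ({x | -y + x ∈ DZ k₂ j₂} ∩ DZ k₃ j₃) ≤
      ENNReal.ofReal (2 * 2 ^ k₂ + 1) *
        ENNReal.ofReal (2 * (4 * (2 ^ j₂ + 2 ^ j₃) / (2 ^ k₃ / 2) ^ 2) + 1) *
        ENNReal.ofReal (2 * min (2 ^ j₂) (2 ^ j₃)) := by
  have hE : MeasurableSet ({x | -y + x ∈ DZ k₂ j₂} ∩ DZ k₃ j₃) :=
    (measurable_const_add (-y) (measurableSet_DZ k₂ j₂)).inter (measurableSet_DZ k₃ j₃)
  refine (prod_count_le_of_slices (L := ENNReal.ofReal (2 * min (2 ^ j₂) (2 ^ j₃))) hE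
    (fun x hx => (bounds_of_mem_translate_DZ_inter_DZ hx).1) fun ζ _ => ?_).trans ?_
  · rw [mul_min_of_nonneg _ _ zero_le_two, ENNReal.ofReal_min,
      ← Real.volume_setOf_abs_sub_le (y.2 + omegaZK (ζ - y.1)),
      ← Real.volume_setOf_abs_sub_le (omegaZK ζ)]
    exact le_min (measure_mono fun t ht => (bounds_of_mem_translate_DZ_inter_DZ ht).2.1)
      (measure_mono fun t ht => (bounds_of_mem_translate_DZ_inter_DZ ht).2.2)
  · gcongr
    refine count_resonantSet_le (by positivity) (by positivity) ?_
    have : (2 : ℝ) ^ 4 * 2 ^ k₂ ≤ 2 ^ k₃ / 2 := by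
      rw [le_div_iff₀ two_pos, ← pow_add, ← pow_succ]
      exact pow_le_pow_right₀ one_le_two (by omega)
    nlinarith [pow_pos (two_pos (α := ℝ)) k₂]

theorem two_rpow_half_sq (x : ℝ) : ((2 : ℝ) ^ (x / 2)) ^ 2 = 2 ^ x := by
  rw [← Real.rpow_natCast, ← Real.rpow_mul zero_le_two]
  norm_num

theorem fiber_count_mul_slice_length_le {b c r q : ℝ} (hb : 0 < b) (hc : 0 < c) (hq : 0 < q)
    (hqr : q ≤ 2 ^ 5 * r) :
    (2 * (4 * (b + c) / (r / 2) ^ 2) + 1) * (2 * min b c) ≤ 2 ^ 17 * b * (1 + c / q ^ 2) := by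
  have hr : 0 < r := by linarith
  have hinv : 1 / r ^ 2 ≤ 2 ^ 10 / q ^ 2 := by
    rw [div_le_div_iff₀ (by positivity) (by positivity)]
    nlinarith
  have hmin : min b c * (b + c) ≤ 2 * b * c := by
    nlinarith [min_le_left b c, min_le_right b c, (lt_min hb hc).le]
  calc (2 * (4 * (b + c) / (r / 2) ^ 2) + 1) * (2 * min b c)
      = 64 * (min b c * (b + c)) * (1 / r ^ 2) + 2 * min b c := by field_simp; ring
    _ ≤ 64 * (2 * b * c) * (2 ^ 10 / q ^ 2) + 2 * b := by
        gcongr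
        exact min_le_left b c
    _ ≤ 2 ^ 17 * b * (1 + c / q ^ 2) := by
        rw [show 64 * (2 * b * c) * (2 ^ 10 / q ^ 2) = 2 ^ 17 * b * (c / q ^ 2) by ring]
        linarith

theorem high_low_bound_le_sq (k₁ k₂ k₃ j₂ j₃ : ℕ) (hk : k₁ ≤ k₃ + 5) :
    (2 * 2 ^ k₂ + 1) * (2 * (4 * (2 ^ j₂ + 2 ^ j₃) / (2 ^ k₃ / 2) ^ 2) + 1) *
        (2 * min (2 ^ j₂) (2 ^ j₃)) ≤
      ((2 : ℝ) ^ 10 * 2 ^ ((j₂ : ℝ) / 2) * 2 ^ ((k₂ : ℝ) / 2) *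
        (1 + 2 ^ (((j₃ : ℝ) - 2 * k₁) / 2))) ^ 2 := by
  set s : ℝ := 2 ^ (((j₃ : ℝ) - 2 * k₁) / 2)
  have hs : s ^ 2 = 2 ^ j₃ / (2 ^ k₁) ^ 2 := by
    rw [two_rpow_half_sq, Real.rpow_sub zero_lt_two, Real.rpow_natCast, Real.rpow_mul zero_le_two,
      ← pow_mul, pow_mul']
    norm_num
  have hfib := fiber_count_mul_slice_length_le (b := 2 ^ j₂) (c := 2 ^ j₃) (r := 2 ^ k₃) (by positivity)
    (by positivity) (by positivity : (0 : ℝ) < 2 ^ k₁)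
    (by rw [← pow_add]; exact pow_le_pow_right₀ one_le_two (by omega))
  have ha : (1 : ℝ) ≤ 2 ^ k₂ := one_le_pow₀ one_le_two
  calc _ = (2 * 2 ^ k₂ + 1) * ((2 * (4 * (2 ^ j₂ + 2 ^ j₃) / (2 ^ k₃ / 2) ^ 2) + 1) *
          (2 * min (2 ^ j₂) (2 ^ j₃))) := by ring
    _ ≤ (4 * 2 ^ k₂) * (2 ^ 17 * 2 ^ j₂ * (1 + s ^ 2)) := by
        rw [hs]; gcongr; linarith
    _ ≤ 2 ^ 20 * 2 ^ j₂ * 2 ^ k₂ * (1 + s) ^ 2 := by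
        have : 0 ≤ s := by positivity
        have : (0 : ℝ) ≤ 2 ^ j₂ * 2 ^ k₂ := by positivity
        nlinarith
    _ = _ := by
        rw [mul_pow, mul_pow, mul_pow, two_rpow_half_sq, two_rpow_half_sq, Real.rpow_natCast,
          Real.rpow_natCast]
        ring

theorem convZ_eq_lconvolution {f g : (ℤ × ℤ) × ℝ → ℝ} (hf : AEMeasurable f muZ)
    (hg : AEMeasurable g muZ) (p : (ℤ × ℤ) × ℝ) :
    convZ f g p = ((fun x => ENNReal.ofReal (f x)) ⋆ₗ[muZ] fun x => ENNReal.ofReal (g x)) p := by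
  have hF := hf.ennreal_ofReal
  have hG := hg.ennreal_ofReal
  rw [lconvolution_def, muZ, lintegral_prod _ (by unfold muZ at hF hG; fun_prop), lintegral_count]
  obtain ⟨ζ, τ⟩ := p
  simp only [convZ, neg_add_eq_sub, Prod.mk_sub_mk]

/-- Isotropic High×Low→High bilinear convolution estimate for the periodic
Zakharov-Kuznetsov equation: if `|k₁ - k₃| ≤ 5` and `k₂ ≤ k₁ - 10`, then
`∫ (f₁ * f₂) f₃ ≲ ‖f₁‖_{L²} 2^{j₂/2} 2^{k₂/2} ‖f₂‖_{L²} (1 + 2^{(j₃-2k₁)/2}) ‖f₃‖_{L²}`. -/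
theorem isotropic_bilinear_estimate_high_low :
    ∃ C > 0, ∀ (k₁ k₂ k₃ j₁ j₂ j₃ : ℕ),
      |(k₁ : ℤ) - (k₃ : ℤ)| ≤ 5 → (k₂ : ℤ) ≤ (k₁ : ℤ) - 10 →
      ∀ (f₁ f₂ f₃ : (ℤ × ℤ) × ℝ → ℝ),
      (∀ p, 0 ≤ f₁ p) → (∀ p, 0 ≤ f₂ p) → (∀ p, 0 ≤ f₃ p) →
      MemLp f₁ 2 muZ → MemLp f₂ 2 muZ → MemLp f₃ 2 muZ →
      Function.support f₁ ⊆ DZ k₁ j₁ →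
      Function.support f₂ ⊆ DZ k₂ j₂ →
      Function.support f₃ ⊆ DZ k₃ j₃ →
      ∫⁻ p, convZ f₁ f₂ p * ENNReal.ofReal (f₃ p) ∂muZ ≤
        ENNReal.ofReal (C * (2:ℝ) ^ ((j₂ : ℝ)/2) * (2:ℝ) ^ ((k₂ : ℝ)/2) *
            (1 + (2:ℝ) ^ (((j₃ : ℝ) - 2 * (k₁ : ℝ))/2))) *
          (eLpNorm f₁ 2 muZ * eLpNorm f₂ 2 muZ * eLpNorm f₃ 2 muZ) := by
  refine ⟨2 ^ 10, by positivity, ?_⟩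
  intro k₁ k₂ k₃ j₁ j₂ j₃ hk₁₃ hk₂ f₁ f₂ f₃ h₁ h₂ h₃ hL₁ hL₂ hL₃ _ hs₂ hs₃
  have hk : k₂ + 5 ≤ k₃ ∧ k₁ ≤ k₃ + 5 := by have := abs_le.mp hk₁₃; omega
  have hE : ∀ y, muZ ({x | -y + x ∈ DZ k₂ j₂} ∩ DZ k₃ j₃) ≤
      ENNReal.ofReal (2 ^ 10 * (2:ℝ) ^ ((j₂ : ℝ)/2) * (2:ℝ) ^ ((k₂ : ℝ)/2) *
        (1 + (2:ℝ) ^ (((j₃ : ℝ) - 2 * (k₁ : ℝ))/2))) ^ 2 := fun y => by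
    refine (muZ_translate_DZ_inter_DZ_le k₂ k₃ j₂ j₃ hk.1 y).trans ?_
    rw [← ENNReal.ofReal_mul (by positivity), ← ENNReal.ofReal_mul (by positivity),
      ← ENNReal.ofReal_pow (by positivity)]
    exact ENNReal.ofReal_le_ofReal (high_low_bound_le_sq k₁ k₂ k₃ j₂ j₃ hk.2)
  rw [← eLpNorm_ofReal_of_nonneg h₁, ← eLpNorm_ofReal_of_nonneg h₂,
    ← eLpNorm_ofReal_of_nonneg h₃]
  simp_rw [convZ_eq_lconvolution hL₁.1.aemeasurable hL₂.1.aemeasurable]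
  exact lintegral_lconvolution_mul_le hL₁.1.aemeasurable.ennreal_ofReal
    hL₂.1.aemeasurable.ennreal_ofReal hL₃.1.aemeasurable.ennreal_ofReal
    ((support_comp_subset ENNReal.ofReal_zero f₂).trans hs₂)
    ((support_comp_subset ENNReal.ofReal_zero f₃).trans hs₃) hE
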